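/- arXiv:1909.08421 — 3 statements merged into one kernel-verified Lean document; each statement's English description precedes it below -/
import Mathlib

section
/- Let U, J, V : ℝ → ℝ be differentiable functions satisfying U' = ξU - UV, J' = UV - J, V' = -mV + J with ξ = -m. Then the function I(t) = e^{mt}(U(t) + J(t) - (m-1)V(t)) is constant, i.e., its derivative vanishes everywhere. -/
open Real

/-! The bilinear terms `UV` cancel in `U + J - (m - 1) V`, and when `ξ = -m` this combination
solves the linear equation `W' = -m W`, so `e^{mt} W` is constant. -/

theorem hasDerivAt_exp_mul_mul_eq_zero {m t : ℝ} {W : ℝ → ℝ}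
    (hW : HasDerivAt W (-m * W t) t) :
    HasDerivAt (fun t => exp (m * t) * W t) 0 t := by
  have hexp : HasDerivAt (fun t => exp (m * t)) (exp (m * t) * m) t := by
    simpa using ((hasDerivAt_id t).const_mul m).exp
  exact (hexp.mul hW).congr_deriv (by ring)

theorem virotherapy_first_integral (m ξ : ℝ) (U J V : ℝ → ℝ)
    (hξ : ξ = -m)
    (hU : ∀ t, HasDerivAt U (ξ * U t - U t * V t) t)
    (hJ : ∀ t, HasDerivAt J (U t * V t - J t) t)
    (hV : ∀ t, HasDerivAt V (-m * V t + J t) t) :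
    ∀ t, HasDerivAt (fun t => Real.exp (m * t) * (U t + J t - (m - 1) * V t)) 0 t := by
  intro t
  apply hasDerivAt_exp_mul_mul_eq_zero
  subst hξ
  exact (((hU t).add (hJ t)).sub ((hV t).const_mul (m - 1))).congr_deriv (by ring)
end

section
/- Let x, z : ℝ → ℝ be differentiable with x > 0 satisfying x' = -xze^{-mt}, z' = c - x + (m-1)z. Define Q(t) = log x(t) - t and P(t) = z(t)e^{-(m-1)t}. Then Q' = ∂H̃/∂P = -1 - Pe^{-t} and P' = -∂H̃/∂Q = -e^{Q-(m-2)t} + ce^{-(m-1)t}, where H̃(Q,P,t) = e^{Q-(m-2)t} - P - c(Q+t)e^{-(m-1)t} - (P²/2)e^{-t}. -/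
open Real

theorem hasDerivAt_mul_exp_const_mul {f : ℝ → ℝ} {f' t : ℝ} (a : ℝ) (hf : HasDerivAt f f' t) :
    HasDerivAt (fun s => f s * exp (a * s)) ((f' + a * f t) * exp (a * t)) t := by
  have he : HasDerivAt (fun s => exp (a * s)) (exp (a * t) * a) t := by
    simpa using ((hasDerivAt_id t).const_mul a).exp
  exact (hf.mul he).congr_deriv (by ring)

theorem exp_neg_mul_eq_exp_neg_sub_one_mul_mul_exp_neg (m t : ℝ) :
    exp (-(m * t)) = exp (-(m - 1) * t) * exp (-t) := by
  rw [← exp_add]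
  ring_nf

theorem exp_log_sub_sub_mul {x : ℝ} (hx : 0 < x) (m t : ℝ) :
    exp ((log x - t) - (m - 2) * t) = x * exp (-(m - 1) * t) := by
  rw [show (log x - t) - (m - 2) * t = log x + -(m - 1) * t by ring, exp_add, exp_log hx]

theorem virotherapy_hamiltons_equations (m c : ℝ) (x z : ℝ → ℝ)
    (hxpos : ∀ t, 0 < x t)
    (hx : ∀ t, HasDerivAt x (-(x t * z t * Real.exp (-(m * t)))) t)
    (hz : ∀ t, HasDerivAt z (c - x t + (m - 1) * z t) t) :
    ∀ t, HasDerivAt (fun s => Real.log (x s) - s)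
        (-1 - (z t * Real.exp (-(m - 1) * t)) * Real.exp (-t)) t ∧
      HasDerivAt (fun s => z s * Real.exp (-(m - 1) * s))
        (-Real.exp ((Real.log (x t) - t) - (m - 2) * t) + c * Real.exp (-(m - 1) * t)) t := by
  intro t
  have hx0 := hxpos t
  constructor
  · refine (((hx t).log hx0.ne').sub (hasDerivAt_id t)).congr_deriv ?_
    rw [exp_neg_mul_eq_exp_neg_sub_one_mul_mul_exp_neg]
    field_simp
    ring
  · refine (hasDerivAt_mul_exp_const_mul (-(m - 1)) (hz t)).congr_deriv ?_
    rw [exp_log_sub_sub_mul hx0]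
    ring
end

section
/- If U, J, V : ℝ → ℝ satisfy U' = -mU - UV, J' = UV - J, V' = -mV + J with m ≠ 1, U > 0 everywhere, and initial data satisfying U(0) + J(0) - (m-1)V(0) = c, then x(t) = U(t)e^{mt} satisfies the second-order ODE x'' - (x')²/x + x' + x(c-x)e^{-mt} = 0. -/
open Real

theorem virotherapy_full_reduction (m c : ℝ) (hm : m ≠ 1) (U J V : ℝ → ℝ)
    (hU : ∀ t, HasDerivAt U (-m * U t - U t * V t) t)
    (hJ : ∀ t, HasDerivAt J (U t * V t - J t) t)
    (hV : ∀ t, HasDerivAt V (-m * V t + J t) t)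
    (hUpos : ∀ t, 0 < U t)
    (hinit : U 0 + J 0 - (m - 1) * V 0 = c)
    (x : ℝ → ℝ) (hxdef : x = fun t => U t * Real.exp (m * t)) :
    ∀ t, HasDerivAt (deriv x)
      ((deriv x t) ^ 2 / x t - deriv x t - x t * (c - x t) * Real.exp (-(m * t))) t := by
  have hexp : ∀ t : ℝ, HasDerivAt (fun s => Real.exp (m * s)) (Real.exp (m * t) * m) t := by
    intro t
    exact ((hasDerivAt_id t).const_mul m).exp.congr_deriv (by simp only [id_eq]; ring)
  -- conservation law
  have hWsum : ∀ t, HasDerivAt (fun s => U s + J s - (m - 1) * V s)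
      ((-m * U t - U t * V t) + (U t * V t - J t) - (m - 1) * (-m * V t + J t)) t := by
    intro t
    exact ((hU t).add (hJ t)).sub ((hV t).const_mul (m - 1))
  have hW : ∀ t, HasDerivAt (fun s => Real.exp (m * s) * (U s + J s - (m - 1) * V s)) 0 t := by
    intro t
    have := (hexp t).mul (hWsum t)
    exact this.congr_deriv (by ring)
  have key : ∀ t, Real.exp (m * t) * (U t + J t - (m - 1) * V t) = c := by
    intro t
    have hconst := is_const_of_deriv_eq_zero (f := fun s => Real.exp (m * s) * (U s + J s - (m - 1) * V s))
      (fun s => (hW s).differentiableAt) (fun s => (hW s).deriv) t 0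
    simpa [hinit] using hconst
  have hx' : ∀ t, HasDerivAt x (-(U t * Real.exp (m * t) * V t)) t := by
    intro t
    rw [hxdef]
    exact ((hU t).mul (hexp t)).congr_deriv (by ring)
  have hderiv : deriv x = fun t => -(U t * Real.exp (m * t) * V t) :=
    funext fun t => (hx' t).deriv
  intro t
  have h2 : HasDerivAt (fun s => -(U s * Real.exp (m * s) * V s))
      (-((-(U t * Real.exp (m * t) * V t)) * V t + (U t * Real.exp (m * t)) * (-m * V t + J t))) t := by
    have hxV : HasDerivAt (fun s => U s * Real.exp (m * s) * V s)
        ((-(U t * Real.exp (m * t) * V t)) * V t + (U t * Real.exp (m * t)) * (-m * V t + J t)) t := by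
      have := (hx' t).mul (hV t)
      rw [hxdef] at this
      exact this
    exact hxV.neg
  rw [hderiv, hxdef]
  convert h2 using 1
  rw [← key t, Real.exp_neg]
  have hU0 : U t ≠ 0 := ne_of_gt (hUpos t)
  have hE : Real.exp (m * t) ≠ 0 := Real.exp_ne_zero _
  field_simp
  ring
end
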